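/- arXiv:2401.06492 — 3 statements merged into one kernel-verified Lean document; each statement's English description precedes it below -/
import Mathlib

section
/- Let E be a real Banach space, m ≥ 1, and let u : ℝ → E be (m+1)-times continuously differentiable. Let τ > 0, set t_j := j·τ, and let n ≥ m. Then for all ℓ₁, ℓ₂ ∈ {0, 1, …, m} one has ‖∂_τ^{m−ℓ₁}(u^{(ℓ₁)})(t_n) − ∂_τ^{m−ℓ₂}(u^{(ℓ₂)})(t_n)‖² ≤ m³ · τ · ∫_{t_{n−m}}^{t_n} ‖u^{(m+1)}(s)‖² ds, where ∂_τ^{k} is applied to the grid sequence j ↦ u^{(ℓ)}(t_j). -/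
/-!
Each mixed quotient `∂_τ^{m-ℓ} u^{(ℓ)}(t_n)` obeys a mean value inclusion: it lies in every
closed ball that contains `u^{(m)}` on the window `[t_{n-m}, t_n]`. Indeed one backward difference
of grid values is the grid of the continuous quotient `τ⁻¹ (v - v(· - τ))`, whose `k`-th
derivative is a slope of `v^{(k)}`, and the mean value theorem puts slopes of `v^{(k)}` in any
ball containing the values of `v^{(k+1)}`. Since `u^{(m)}` oscillates on the window by at most
`∫ ‖u^{(m+1)}‖`, two mixed quotients differ by at most this integral, and Cauchy–Schwarz on an
interval of length `mτ` gives the bound, with `m ≤ m³`.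
-/

/-- Backward difference quotient of a sequence: `∂_τ a j = (a j - a (j-1)) / τ`
(with the `Nat` subtraction convention at `j = 0`). -/
noncomputable def dtau {E : Type*} [AddCommGroup E] [Module ℝ E] (τ : ℝ) (a : ℕ → E) :
    ℕ → E := fun j => τ⁻¹ • (a j - a (j - 1))

open Set

section BackwardDifference

variable {E : Type*} [AddCommGroup E] [Module ℝ E]

theorem iterate_dtau_apply_congr (τ : ℝ) {k n : ℕ} {a b : ℕ → E} (hkn : k ≤ n)
    (hab : ∀ j, n - k ≤ j → j ≤ n → a j = b j) :
    (dtau τ)^[k] a n = (dtau τ)^[k] b n := by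
  induction k generalizing a b with
  | zero => exact hab n (by omega) le_rfl
  | succ k ih =>
    rw [Function.iterate_succ_apply, Function.iterate_succ_apply]
    refine ih (by omega) fun j hj hjn => ?_
    simp only [dtau, hab j (by omega) hjn, hab (j - 1) (by omega) (by omega)]

theorem dtau_comp_mul (τ : ℝ) (v : ℝ → E) {j : ℕ} (hj : 1 ≤ j) :
    dtau τ (fun i : ℕ => v (i * τ)) j = τ⁻¹ • (v (j * τ) - v (j * τ - τ)) := by
  simp only [dtau, Nat.cast_sub hj, Nat.cast_one, sub_mul, one_mul]

theorem iterate_succ_dtau_comp_mul (τ : ℝ) (v : ℝ → E) {k n : ℕ} (hkn : k < n) :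
    (dtau τ)^[k + 1] (fun j : ℕ => v (j * τ)) n =
      (dtau τ)^[k] (fun j : ℕ => τ⁻¹ • (v (j * τ) - v (j * τ - τ))) n := by
  rw [Function.iterate_succ_apply]
  exact iterate_dtau_apply_congr τ hkn.le fun j hj _ => dtau_comp_mul τ v (by omega)

end BackwardDifference

section Calculus

variable {E : Type*} [NormedAddCommGroup E] [NormedSpace ℝ E]

theorem iteratedDeriv_iteratedDeriv (k ℓ : ℕ) (f : ℝ → E) :
    iteratedDeriv k (iteratedDeriv ℓ f) = iteratedDeriv (k + ℓ) f := by
  simp only [iteratedDeriv_eq_iterate, Function.iterate_add_apply]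

theorem ContDiff.hasDerivAt_iteratedDeriv {k : ℕ} {f : ℝ → E} (hf : ContDiff ℝ (k + 1 : ℕ) f)
    (t : ℝ) : HasDerivAt (iteratedDeriv k f) (iteratedDeriv (k + 1) f t) t := by
  rw [iteratedDeriv_succ]
  exact (hf.differentiable_iteratedDeriv k (by exact_mod_cast k.lt_succ_self) t).hasDerivAt

theorem iteratedDeriv_backward_difference_quotient {k : ℕ} {v : ℝ → E} (hv : ContDiff ℝ k v)
    (τ s : ℝ) :
    iteratedDeriv k (fun t => τ⁻¹ • (v t - v (t - τ))) s =
      τ⁻¹ • (iteratedDeriv k v s - iteratedDeriv k v (s - τ)) := by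
  have hv_shift : ContDiff ℝ k fun t => v (t - τ) := hv.comp (contDiff_id.sub contDiff_const)
  rw [iteratedDeriv_fun_const_smul_field,
    iteratedDeriv_fun_sub hv.contDiffAt hv_shift.contDiffAt, iteratedDeriv_comp_sub_const]

theorem norm_slope_sub_le_of_norm_deriv_sub_le {f f' : ℝ → E} {a b : ℝ}
    (hf : ∀ t ∈ Icc a b, HasDerivWithinAt f (f' t) (Icc a b) t) {w : E} {C : ℝ}
    (hC : ∀ t ∈ Icc a b, ‖f' t - w‖ ≤ C) {x y : ℝ} (hx : x ∈ Icc a b) (hy : y ∈ Icc a b)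
    (hxy : x ≠ y) :
    ‖slope f x y - w‖ ≤ C := by
  have hg : ∀ t ∈ Icc a b, HasDerivWithinAt (fun t => f t - t • w) (f' t - w) (Icc a b) t :=
    fun t ht => (hf t ht).sub (by simpa using (hasDerivWithinAt_id t _).smul_const w)
  have hmv := (convex_Icc a b).norm_image_sub_le_of_norm_hasDerivWithin_le hg hC hx hy
  have hyx : y - x ≠ 0 := sub_ne_zero.2 hxy.symm
  have hslope : slope f x y - w = (y - x)⁻¹ • ((f y - y • w) - (f x - x • w)) := by
    rw [slope_def_module, show (f y - y • w) - (f x - x • w) = (f y - f x) - (y - x) • w by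
      rw [sub_smul]; abel, smul_sub (y - x)⁻¹ (f y - f x), smul_smul, inv_mul_cancel₀ hyx,
      one_smul]
  rw [hslope, norm_smul, norm_inv, ← div_eq_inv_mul, div_le_iff₀ (norm_pos_iff.2 hyx)]
  exact hmv

theorem norm_sub_le_intervalIntegral_norm_deriv {f f' : ℝ → E} (hf : ∀ t, HasDerivAt f (f' t) t)
    (hf' : Continuous f') {x y : ℝ} (hxy : x ≤ y) :
    ‖f y - f x‖ ≤ ∫ t in x..y, ‖f' t‖ := by
  have hbound : ∀ t, HasDerivAt (fun t => ∫ σ in x..t, ‖f' σ‖) ‖f' t‖ t := fun t =>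
    (hf'.norm.integral_hasStrictDerivAt x t).hasDerivAt
  have hcont : ContinuousOn (fun t => f t - f x) (Icc x y) :=
    ((continuous_iff_continuousAt.2 fun t => (hf t).continuousAt).sub
      continuous_const).continuousOn
  simpa using image_norm_le_of_norm_deriv_right_le_deriv_boundary hcont
    (fun t _ => ((hf t).sub_const (f x)).hasDerivWithinAt) (by simp) hbound
    (fun t _ => le_rfl) (right_mem_Icc.2 hxy)

theorem norm_sub_le_intervalIntegral_norm_deriv_of_mem_Icc {f f' : ℝ → E}
    (hf : ∀ t, HasDerivAt f (f' t) t) (hf' : Continuous f') {a b x y : ℝ} (hx : x ∈ Icc a b)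
    (hy : y ∈ Icc a b) :
    ‖f y - f x‖ ≤ ∫ t in a..b, ‖f' t‖ := by
  have hsub : ∀ {p q}, p ∈ Icc a b → q ∈ Icc a b → p ≤ q →
      ∫ t in p..q, ‖f' t‖ ≤ ∫ t in a..b, ‖f' t‖ := fun hp hq hpq =>
    intervalIntegral.integral_mono_interval hp.1 hpq hq.2
      (Filter.Eventually.of_forall fun _ => norm_nonneg _) (hf'.norm.intervalIntegrable _ _)
  rcases le_total x y with hxy | hyx
  · exact (norm_sub_le_intervalIntegral_norm_deriv hf hf' hxy).trans (hsub hx hy hxy)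
  · rw [norm_sub_rev]
    exact (norm_sub_le_intervalIntegral_norm_deriv hf hf' hyx).trans (hsub hy hx hyx)

end Calculus

theorem sq_intervalIntegral_le_mul_intervalIntegral_sq {φ : ℝ → ℝ} (hφ : Continuous φ)
    {a b : ℝ} (hab : a ≤ b) :
    (∫ x in a..b, φ x) ^ 2 ≤ (b - a) * ∫ x in a..b, φ x ^ 2 := by
  rcases hab.eq_or_lt with rfl | hlt
  · simp
  have jensen : (⨍ x in a..b, φ x) ^ 2 ≤ ⨍ x in a..b, φ x ^ 2 :=
    even_two.convexOn_pow.map_set_average_le (continuous_pow 2).continuousOn isClosed_univ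
      (by simp [uIoc_of_le hab, hlt]) (by simp [uIoc_of_le hab])
      (by simp) hφ.integrableOn_uIoc (hφ.pow 2).integrableOn_uIoc
  have hlength : 0 < b - a := sub_pos.2 hlt
  rw [interval_average_eq_div, interval_average_eq_div, div_pow,
    div_le_div_iff₀ (by positivity) hlength] at jensen
  nlinarith

section MeanValueInclusion

variable {E : Type*} [NormedAddCommGroup E] [NormedSpace ℝ E]

theorem norm_iterate_dtau_comp_mul_sub_le {τ : ℝ} (hτ : 0 < τ) {k n : ℕ} (hkn : k ≤ n)
    {v : ℝ → E} (hv : ContDiff ℝ k v) {w : E} {C : ℝ}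
    (hC : ∀ s ∈ Icc (((n - k : ℕ) : ℝ) * τ) (n * τ), ‖iteratedDeriv k v s - w‖ ≤ C) :
    ‖(dtau τ)^[k] (fun j : ℕ => v (j * τ)) n - w‖ ≤ C := by
  induction k generalizing v with
  | zero => simpa using hC (n * τ) (by simp)
  | succ k ih =>
    have hvk : ContDiff ℝ k v := hv.of_le (by exact_mod_cast k.le_succ)
    have hquot : ContDiff ℝ k fun t => τ⁻¹ • (v t - v (t - τ)) :=
      (hvk.sub (hvk.comp (contDiff_id.sub contDiff_const))).const_smul τ⁻¹
    have hwindow : ((n - (k + 1) : ℕ) : ℝ) * τ = ((n - k : ℕ) : ℝ) * τ - τ := by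
      rw [show n - k = n - (k + 1) + 1 by omega]; push_cast; ring
    rw [iterate_succ_dtau_comp_mul τ v (by omega)]
    refine ih (by omega) hquot fun s hs => ?_
    rw [iteratedDeriv_backward_difference_quotient hvk, show τ⁻¹ • (iteratedDeriv k v s -
      iteratedDeriv k v (s - τ)) = slope (iteratedDeriv k v) (s - τ) s by
      rw [slope_def_module, sub_sub_cancel]]
    refine norm_slope_sub_le_of_norm_deriv_sub_le
      (fun t _ => (hv.hasDerivAt_iteratedDeriv t).hasDerivWithinAt) hC
      ⟨?_, ?_⟩ ⟨?_, hs.2⟩ (by linarith) <;> linarith [hs.1, hs.2]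

theorem norm_iterate_dtau_iteratedDeriv_sub_le {τ : ℝ} (hτ : 0 < τ) {m ℓ n : ℕ} (hℓ : ℓ ≤ m)
    (hmn : m ≤ n) {u : ℝ → E} (hu : ContDiff ℝ m u) {w : E} {C : ℝ}
    (hC : ∀ s ∈ Icc (((n - m : ℕ) : ℝ) * τ) (n * τ), ‖iteratedDeriv m u s - w‖ ≤ C) :
    ‖(dtau τ)^[m - ℓ] (fun j : ℕ => iteratedDeriv ℓ u (j * τ)) n - w‖ ≤ C := by
  have hv : ContDiff ℝ (m - ℓ : ℕ) (iteratedDeriv ℓ u) := by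
    rw [iteratedDeriv_eq_iterate]
    exact (Nat.sub_add_cancel hℓ ▸ hu).iterate_deriv' (m - ℓ) ℓ
  refine norm_iterate_dtau_comp_mul_sub_le hτ (by omega) hv fun s hs => ?_
  rw [iteratedDeriv_iteratedDeriv, Nat.sub_add_cancel hℓ]
  refine hC s ⟨le_trans ?_ hs.1, hs.2⟩
  gcongr
  omega

end MeanValueInclusion

theorem discrete_derivative_defect_sq_estimate_general
    {E : Type*} [NormedAddCommGroup E] [NormedSpace ℝ E]
    (m : ℕ) (u : ℝ → E) (hu : ContDiff ℝ (m + 1 : ℕ) u)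
    (τ : ℝ) (hτ : 0 < τ) (n : ℕ) (hn : m ≤ n)
    (ℓ₁ ℓ₂ : ℕ) (hℓ₁ : ℓ₁ ≤ m) (hℓ₂ : ℓ₂ ≤ m) :
    ‖(dtau τ)^[m - ℓ₁] (fun j : ℕ => iteratedDeriv ℓ₁ u ((j : ℝ) * τ)) n -
        (dtau τ)^[m - ℓ₂] (fun j : ℕ => iteratedDeriv ℓ₂ u ((j : ℝ) * τ)) n‖ ^ 2 ≤
      (m : ℝ) ^ 3 * τ *
        ∫ s in (((n - m : ℕ) : ℝ) * τ)..((n : ℝ) * τ),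
          ‖iteratedDeriv (m + 1) u s‖ ^ 2 := by
  set D : ℕ → E := fun ℓ => (dtau τ)^[m - ℓ] (fun j : ℕ => iteratedDeriv ℓ u ((j : ℝ) * τ)) n
  set J := ∫ s in (((n - m : ℕ) : ℝ) * τ)..((n : ℝ) * τ), ‖iteratedDeriv (m + 1) u s‖
  have hum : ContDiff ℝ m u := hu.of_le (by exact_mod_cast m.le_succ)
  have hQ : Continuous (iteratedDeriv (m + 1) u) := hu.continuous_iteratedDeriv _ le_rfl
  have hD₂ : ∀ s ∈ Icc (((n - m : ℕ) : ℝ) * τ) (n * τ), ‖iteratedDeriv m u s - D ℓ₂‖ ≤ J :=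
    fun s hs => norm_sub_rev (D ℓ₂) _ ▸ norm_iterate_dtau_iteratedDeriv_sub_le hτ hℓ₂ hn hum
      fun σ hσ => norm_sub_le_intervalIntegral_norm_deriv_of_mem_Icc
        hu.hasDerivAt_iteratedDeriv hQ hs hσ
  have hD₁₂ : ‖D ℓ₁ - D ℓ₂‖ ≤ J := norm_iterate_dtau_iteratedDeriv_sub_le hτ hℓ₁ hn hum hD₂
  have hwindow : ((n - m : ℕ) : ℝ) * τ ≤ n * τ := by gcongr; omega
  have hlength : (n : ℝ) * τ - ((n - m : ℕ) : ℝ) * τ = m * τ := by rw [Nat.cast_sub hn]; ring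
  calc ‖D ℓ₁ - D ℓ₂‖ ^ 2 ≤ J ^ 2 := pow_le_pow_left₀ (norm_nonneg _) hD₁₂ 2
    _ ≤ m * τ * ∫ s in (((n - m : ℕ) : ℝ) * τ)..((n : ℝ) * τ), ‖iteratedDeriv (m + 1) u s‖ ^ 2 :=
      hlength ▸ sq_intervalIntegral_le_mul_intervalIntegral_sq hQ.norm hwindow
    _ ≤ _ := by
      gcongr
      · exact intervalIntegral.integral_nonneg hwindow fun _ _ => by positivity
      · exact_mod_cast Nat.le_self_pow (by norm_num) m

/-- Second estimate of Lemma 4.2 of the paper, with the explicit constant `m³` from its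
proof: for a `C^{m+1}` function `u`, mixed discrete/continuous derivatives of total
order `m` differ in square norm by at most `m³ τ ∫_{t_{n-m}}^{t_n} ‖u^{(m+1)}‖²`. -/
theorem discrete_derivative_defect_sq_estimate
    {E : Type*} [NormedAddCommGroup E] [NormedSpace ℝ E]
    (m : ℕ) (hm : 1 ≤ m) (u : ℝ → E) (hu : ContDiff ℝ (m + 1 : ℕ) u)
    (τ : ℝ) (hτ : 0 < τ) (n : ℕ) (hn : m ≤ n)
    (ℓ₁ ℓ₂ : ℕ) (hℓ₁ : ℓ₁ ≤ m) (hℓ₂ : ℓ₂ ≤ m) :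
    ‖(dtau τ)^[m - ℓ₁] (fun j : ℕ => iteratedDeriv ℓ₁ u ((j : ℝ) * τ)) n -
        (dtau τ)^[m - ℓ₂] (fun j : ℕ => iteratedDeriv ℓ₂ u ((j : ℝ) * τ)) n‖ ^ 2 ≤
      (m : ℝ) ^ 3 * τ *
        ∫ s in (((n - m : ℕ) : ℝ) * τ)..((n : ℝ) * τ),
          ‖iteratedDeriv (m + 1) u s‖ ^ 2 :=
  discrete_derivative_defect_sq_estimate_general m u hu τ hτ n hn ℓ₁ ℓ₂ hℓ₁ hℓ₂
end

section
/- Let E be a real Banach space, m ≥ 1, and let u : ℝ → E be (m+1)-times continuously differentiable. Let τ > 0, set t_j := j·τ, and let n ≥ m. Then for all ℓ₁, ℓ₂ ∈ {0, 1, …, m} one has ‖∂_τ^{m−ℓ₁}(u^{(ℓ₁)})(t_n) − ∂_τ^{m−ℓ₂}(u^{(ℓ₂)})(t_n)‖ ≤ m² · τ · sup_{s ∈ [t_{n−m}, t_n]} ‖u^{(m+1)}(s)‖, where ∂_τ^{k} is applied to the grid sequence j ↦ u^{(ℓ)}(t_j). -/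
/-!
Sampling on the grid turns `∂_τ` into the backward difference quotient
`Δ_τ v t = (v t - v (t - τ)) / τ` of functions on `ℝ`, which commutes with differentiation.
By the mean value theorem applied to `s ↦ v s - s • z`, one step of `Δ_τ` maps a function whose
derivative stays within `r` of `z` on `[t - τ, t]` to one within `r` of `z` at `t`; iterating,
`Δ_τ^k v t` stays within `r` of `z` whenever `v^{(k)}` does on `[t - kτ, t]`. With `v = u^{(ℓ)}`,
`k = m - ℓ` and `z = u^{(m)}(t_n)`, the mean value theorem once more gives
`‖∂_τ^{m-ℓ} u^{(ℓ)}(t_n) - u^{(m)}(t_n)‖ ≤ (m - ℓ) τ sup ‖u^{(m+1)}‖`, and for `ℓ₁ ≠ ℓ₂` the two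
defects add up to at most `(2m - 1) τ sup ‖u^{(m+1)}‖ ≤ m² τ sup ‖u^{(m+1)}‖`.
-/

open Set

theorem iteratedDeriv_iteratedDeriv_s3 {𝕜 F : Type*} [NontriviallyNormedField 𝕜]
    [NormedAddCommGroup F] [NormedSpace 𝕜 F] (k ℓ : ℕ) (f : 𝕜 → F) :
    iteratedDeriv k (iteratedDeriv ℓ f) = iteratedDeriv (k + ℓ) f := by
  simp only [iteratedDeriv_eq_iterate, ← Function.iterate_add_apply]

theorem norm_le_iSup_Icc {E : Type*} [NormedAddCommGroup E] {f : ℝ → E} (hf : Continuous f)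
    {a b s : ℝ} (hs : s ∈ Icc a b) : ‖f s‖ ≤ ⨆ x : Icc a b, ‖f x‖ :=
  le_ciSup (isCompact_range (hf.norm.comp continuous_subtype_val)).bddAbove (⟨s, hs⟩ : Icc a b)

section backwardDiff

variable {E : Type*} [NormedAddCommGroup E] [NormedSpace ℝ E]

noncomputable def backwardDiff (τ : ℝ) (v : ℝ → E) : ℝ → E :=
  fun t => τ⁻¹ • (v t - v (t - τ))

theorem dtau_iterate_grid (τ : ℝ) (v : ℝ → E) {k n : ℕ} (hkn : k ≤ n) :
    (dtau τ)^[k] (fun j : ℕ => v (j * τ)) n = (backwardDiff τ)^[k] v (n * τ) := by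
  induction k generalizing n with
  | zero => rfl
  | succ k ih =>
    obtain ⟨n, rfl⟩ : ∃ n', n = n' + 1 := Nat.exists_eq_add_of_le' (by omega)
    rw [Function.iterate_succ_apply', Function.iterate_succ_apply', dtau, backwardDiff,
      ih (by omega), ih (by omega), Nat.add_sub_cancel]
    push_cast
    rw [add_mul, one_mul, add_sub_cancel_right]

theorem ContDiff.backwardDiff {n : WithTop ℕ∞} (τ : ℝ) {v : ℝ → E} (hv : ContDiff ℝ n v) :
    ContDiff ℝ n (backwardDiff τ v) :=
  (hv.sub (hv.comp (contDiff_id.sub contDiff_const))).const_smul _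

theorem iteratedDeriv_backwardDiff {k : ℕ} (τ : ℝ) {v : ℝ → E} (hv : ContDiff ℝ k v) :
    iteratedDeriv k (backwardDiff τ v) = backwardDiff τ (iteratedDeriv k v) := by
  funext t
  have hshift : ContDiff ℝ k (fun s => v (s - τ)) := hv.comp (contDiff_id.sub contDiff_const)
  change iteratedDeriv k (fun s => τ⁻¹ • (v s - v (s - τ))) t = _
  rw [iteratedDeriv_fun_const_smul_field,
    iteratedDeriv_fun_sub hv.contDiffAt hshift.contDiffAt, iteratedDeriv_comp_sub_const]
  rfl

theorem norm_backwardDiff_sub_le {τ r t : ℝ} (hτ : 0 < τ) {v : ℝ → E} {z : E}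
    (hv : Differentiable ℝ v) (hbound : ∀ s ∈ Icc (t - τ) t, ‖deriv v s - z‖ ≤ r) :
    ‖backwardDiff τ v t - z‖ ≤ r := by
  set g : ℝ → E := fun s => v s - s • z
  have hg : ∀ s, HasDerivAt g (deriv v s - z) s := fun s => by
    simpa using (hv s).hasDerivAt.fun_sub ((hasDerivAt_id' s).smul_const z)
  have hmvt : ‖g t - g (t - τ)‖ ≤ r * τ := by
    simpa [abs_of_pos hτ] using (convex_Icc (t - τ) t).norm_image_sub_le_of_norm_hasDerivWithin_le
      (fun s _ => (hg s).hasDerivWithinAt) hbound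
      (left_mem_Icc.2 (by linarith)) (right_mem_Icc.2 (by linarith))
  have hdiff : backwardDiff τ v t - z = τ⁻¹ • (g t - g (t - τ)) := by
    simp only [backwardDiff, g, sub_smul, smul_sub, smul_smul, inv_mul_cancel₀ hτ.ne', one_smul]
    abel
  calc ‖backwardDiff τ v t - z‖ = τ⁻¹ * ‖g t - g (t - τ)‖ := by
        rw [hdiff, norm_smul, Real.norm_of_nonneg (inv_nonneg.2 hτ.le)]
    _ ≤ τ⁻¹ * (r * τ) := by gcongr
    _ = r := by field_simp

theorem norm_backwardDiff_iterate_sub_le {τ r : ℝ} (hτ : 0 < τ) {z : E} {k : ℕ} {v : ℝ → E}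
    (hv : ContDiff ℝ k v) {t : ℝ}
    (hbound : ∀ s ∈ Icc (t - k * τ) t, ‖iteratedDeriv k v s - z‖ ≤ r) :
    ‖(backwardDiff τ)^[k] v t - z‖ ≤ r := by
  induction k generalizing v with
  | zero => simpa using hbound t (by simp)
  | succ k ih =>
    have hvk : ContDiff ℝ k v := hv.of_le (by exact_mod_cast k.le_succ)
    rw [Function.iterate_succ_apply]
    refine ih (hvk.backwardDiff τ) fun s hs => ?_
    rw [iteratedDeriv_backwardDiff τ hvk]
    refine norm_backwardDiff_sub_le hτ (hv.differentiable_iteratedDeriv' k) fun σ hσ => ?_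
    rw [← iteratedDeriv_succ]
    refine hbound σ ⟨?_, hσ.2.trans hs.2⟩
    push_cast
    linarith [hs.1, hσ.1]

theorem norm_backwardDiff_iterate_sub_iteratedDeriv_le {τ C : ℝ} (hτ : 0 < τ) {k : ℕ}
    {v : ℝ → E} (hv : ContDiff ℝ (k + 1) v) {t : ℝ}
    (hbound : ∀ s ∈ Icc (t - k * τ) t, ‖iteratedDeriv (k + 1) v s‖ ≤ C) :
    ‖(backwardDiff τ)^[k] v t - iteratedDeriv k v t‖ ≤ k * τ * C := by
  have hkτ : 0 ≤ k * τ := by positivity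
  have htmem : t ∈ Icc (t - k * τ) t := ⟨by linarith, le_rfl⟩
  have hC : 0 ≤ C := (norm_nonneg _).trans (hbound t htmem)
  refine norm_backwardDiff_iterate_sub_le hτ (hv.of_le (by exact_mod_cast k.le_succ))
    fun s hs => ?_
  have hmvt := (convex_Icc (t - k * τ) t).norm_image_sub_le_of_norm_deriv_le
    (fun x _ => (hv.differentiable_iteratedDeriv' k).differentiableAt)
    (fun x hx => by rw [← iteratedDeriv_succ]; exact hbound x hx) htmem hs
  calc ‖iteratedDeriv k v s - iteratedDeriv k v t‖ ≤ C * ‖s - t‖ := hmvt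
    _ ≤ C * (k * τ) := by
      gcongr
      rw [Real.norm_eq_abs, abs_of_nonpos (by linarith [hs.2])]
      linarith [hs.1]
    _ = k * τ * C := by ring

end backwardDiff

theorem sub_add_sub_le_sq {m ℓ₁ ℓ₂ : ℕ} (hℓ₁ : ℓ₁ ≤ m) (hℓ₂ : ℓ₂ ≤ m) (hne : ℓ₁ ≠ ℓ₂) :
    ((m - ℓ₁ : ℕ) : ℝ) + (m - ℓ₂ : ℕ) ≤ (m : ℝ) ^ 2 := by
  have : (m - ℓ₁) + (m - ℓ₂) + 1 ≤ 2 * m := by omega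
  have : 2 * m ≤ m ^ 2 + 1 := by nlinarith [sq_nonneg ((m : ℤ) - 1)]
  exact_mod_cast (by omega : (m - ℓ₁) + (m - ℓ₂) ≤ m ^ 2)

theorem norm_dtau_iterate_iteratedDeriv_sub_le {E : Type*} [NormedAddCommGroup E]
    [NormedSpace ℝ E] {m ℓ n : ℕ} {u : ℝ → E} (hu : ContDiff ℝ (m + 1 : ℕ) u) {τ C : ℝ}
    (hτ : 0 < τ) (hℓ : ℓ ≤ m) (hn : m ≤ n)
    (hC : ∀ s ∈ Icc (((n - m : ℕ) : ℝ) * τ) (n * τ), ‖iteratedDeriv (m + 1) u s‖ ≤ C) :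
    ‖(dtau τ)^[m - ℓ] (fun j : ℕ => iteratedDeriv ℓ u (j * τ)) n - iteratedDeriv m u (n * τ)‖ ≤
      (m - ℓ : ℕ) * τ * C := by
  obtain ⟨k, rfl⟩ : ∃ k, m = k + ℓ := ⟨m - ℓ, by omega⟩
  have hv : ContDiff ℝ (k + 1 : ℕ) (iteratedDeriv ℓ u) := by
    rw [iteratedDeriv_eq_iterate]
    exact ContDiff.iterate_deriv' _ _ (by simpa [add_right_comm] using hu)
  rw [Nat.add_sub_cancel, dtau_iterate_grid τ _ (show k ≤ n by omega),
    ← iteratedDeriv_iteratedDeriv_s3]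
  refine norm_backwardDiff_iterate_sub_iteratedDeriv_le hτ (by exact_mod_cast hv) fun s hs => ?_
  rw [iteratedDeriv_iteratedDeriv_s3, show k + 1 + ℓ = k + ℓ + 1 by omega]
  refine hC s ⟨?_, hs.2⟩
  have hℓτ : 0 ≤ (ℓ : ℝ) * τ := by positivity
  push_cast [Nat.cast_sub hn]
  linarith [hs.1]

theorem discrete_derivative_defect_sup_estimate_general
    {E : Type*} [NormedAddCommGroup E] [NormedSpace ℝ E]
    (m : ℕ) (u : ℝ → E) (hu : ContDiff ℝ (m + 1 : ℕ) u)
    (τ : ℝ) (hτ : 0 < τ) (n : ℕ) (hn : m ≤ n)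
    (ℓ₁ ℓ₂ : ℕ) (hℓ₁ : ℓ₁ ≤ m) (hℓ₂ : ℓ₂ ≤ m) :
    ‖(dtau τ)^[m - ℓ₁] (fun j : ℕ => iteratedDeriv ℓ₁ u ((j : ℝ) * τ)) n -
        (dtau τ)^[m - ℓ₂] (fun j : ℕ => iteratedDeriv ℓ₂ u ((j : ℝ) * τ)) n‖ ≤
      (m : ℝ) ^ 2 * τ *
        ⨆ s : Set.Icc (((n - m : ℕ) : ℝ) * τ) ((n : ℝ) * τ),
          ‖iteratedDeriv (m + 1) u (s : ℝ)‖ := by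
  set C := ⨆ s : Set.Icc (((n - m : ℕ) : ℝ) * τ) ((n : ℝ) * τ), ‖iteratedDeriv (m + 1) u (s : ℝ)‖
  have hC : ∀ s ∈ Icc (((n - m : ℕ) : ℝ) * τ) (n * τ), ‖iteratedDeriv (m + 1) u s‖ ≤ C :=
    fun s hs => norm_le_iSup_Icc (hu.continuous_iteratedDeriv' (m + 1)) hs
  have hτC : 0 ≤ τ * C := mul_nonneg hτ.le (Real.iSup_nonneg fun _ => norm_nonneg _)
  rcases eq_or_ne ℓ₁ ℓ₂ with rfl | hne
  · rw [sub_self, norm_zero, mul_assoc]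
    positivity
  set z := iteratedDeriv m u (n * τ)
  calc _ = ‖((dtau τ)^[m - ℓ₁] (fun j : ℕ => iteratedDeriv ℓ₁ u (j * τ)) n - z) -
          ((dtau τ)^[m - ℓ₂] (fun j : ℕ => iteratedDeriv ℓ₂ u (j * τ)) n - z)‖ := by
        rw [sub_sub_sub_cancel_right]
    _ ≤ (m - ℓ₁ : ℕ) * τ * C + (m - ℓ₂ : ℕ) * τ * C :=
        (norm_sub_le _ _).trans <| add_le_add
          (norm_dtau_iterate_iteratedDeriv_sub_le hu hτ hℓ₁ hn hC)
          (norm_dtau_iterate_iteratedDeriv_sub_le hu hτ hℓ₂ hn hC)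
    _ = (((m - ℓ₁ : ℕ) : ℝ) + (m - ℓ₂ : ℕ)) * (τ * C) := by ring
    _ ≤ (m : ℝ) ^ 2 * (τ * C) := by gcongr; exact sub_add_sub_le_sq hℓ₁ hℓ₂ hne
    _ = _ := by ring

/-- The `O(τ)` estimate of Lemma 4.2 of the paper: mixed discrete/continuous derivatives
of total order `m` of a `C^{m+1}` function differ by at most
`m² τ sup_{[t_{n-m}, t_n]} ‖u^{(m+1)}‖`. -/
theorem discrete_derivative_defect_sup_estimate
    {E : Type*} [NormedAddCommGroup E] [NormedSpace ℝ E]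
    (m : ℕ) (hm : 1 ≤ m) (u : ℝ → E) (hu : ContDiff ℝ (m + 1 : ℕ) u)
    (τ : ℝ) (hτ : 0 < τ) (n : ℕ) (hn : m ≤ n)
    (ℓ₁ ℓ₂ : ℕ) (hℓ₁ : ℓ₁ ≤ m) (hℓ₂ : ℓ₂ ≤ m) :
    ‖(dtau τ)^[m - ℓ₁] (fun j : ℕ => iteratedDeriv ℓ₁ u ((j : ℝ) * τ)) n -
        (dtau τ)^[m - ℓ₂] (fun j : ℕ => iteratedDeriv ℓ₂ u ((j : ℝ) * τ)) n‖ ≤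
      (m : ℝ) ^ 2 * τ *
        ⨆ s : Set.Icc (((n - m : ℕ) : ℝ) * τ) ((n : ℝ) * τ),
          ‖iteratedDeriv (m + 1) u (s : ℝ)‖ :=
  discrete_derivative_defect_sup_estimate_general m u hu τ hτ n hn ℓ₁ ℓ₂ hℓ₁ hℓ₂
end

section
/- Let ℓ ≥ 1 and let g : ℝ → [0, ∞) be a measurable function that is integrable on [0, ℓ]. Then ∫_{[0,1]^{ℓ}} g(σ₁ + ⋯ + σ_ℓ) d(σ₁, …, σ_ℓ) ≤ ∫_0^{ℓ} g(s) ds, where the left-hand integral is with respect to ℓ-dimensional Lebesgue measure on the unit cube. -/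
/-!
Peel off the first coordinate and integrate it first: once the other coordinates are fixed, with
sum `c ∈ [0, ℓ - 1]`, the inner integral is `∫_c^{c+1} g ≤ ∫_0^ℓ g`, and the remaining unit cube
has volume one. Working with `lintegral` avoids integrability side conditions until the end.
-/

open MeasureTheory Set
open scoped ENNReal

theorem setLIntegral_Icc_comp_add_right (f : ℝ → ℝ≥0∞) (a b c : ℝ) :
    ∫⁻ t in Icc a b, f (t + c) = ∫⁻ s in Icc (a + c) (b + c), f s := by
  simpa [preimage_add_const_Icc] using
    (measurePreserving_add_right volume c).setLIntegral_comp_preimage_emb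
      (measurableEmbedding_addRight c) f (Icc (a + c) (b + c))

theorem setLIntegral_Icc_fin_succ {n : ℕ} {f : (Fin (n + 1) → ℝ) → ℝ≥0∞} (hf : Measurable f)
    (a b : Fin (n + 1) → ℝ) :
    ∫⁻ x in Icc a b, f x =
      ∫⁻ y in Icc (Fin.tail a) (Fin.tail b), ∫⁻ t in Icc (a 0) (b 0), f (Fin.cons t y) := by
  set e := (MeasurableEquiv.piFinSuccAbove (fun _ : Fin (n + 1) => ℝ) 0).symm
  have he : MeasurePreserving e :=
    (volume_preserving_piFinSuccAbove (fun _ : Fin (n + 1) => ℝ) 0).symm _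
  have hpre : e ⁻¹' Icc a b = Icc (a 0) (b 0) ×ˢ Icc (Fin.tail a) (Fin.tail b) :=
    ((Fin.insertNthOrderIso (fun _ => ℝ) 0).preimage_Icc _ _).trans (Icc_prod_eq _ _)
  rw [← he.setLIntegral_comp_preimage_emb e.measurableEmbedding, hpre, Measure.volume_eq_prod,
    setLIntegral_prod_symm (fun z => f (e z)) (hf.comp e.measurable).aemeasurable]
  simp only [e, MeasurableEquiv.piFinSuccAbove_symm_apply, Fin.insertNthEquiv_zero]
  rfl

theorem setLIntegral_unitCube_comp_sum_le (n : ℕ) {f : ℝ → ℝ≥0∞} (hf : Measurable f) :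
    ∫⁻ σ in Icc (0 : Fin (n + 1) → ℝ) 1, f (∑ i, σ i) ≤ ∫⁻ s in Icc 0 ((n : ℝ) + 1), f s := by
  have hsum : Measurable fun σ : Fin (n + 1) → ℝ => f (∑ i, σ i) :=
    hf.comp (Finset.measurable_sum _ fun i _ => measurable_pi_apply i)
  rw [setLIntegral_Icc_fin_succ hsum]
  calc _ ≤ ∫⁻ _ in Icc (0 : Fin n → ℝ) 1, ∫⁻ s in Icc 0 ((n : ℝ) + 1), f s := by
        refine setLIntegral_mono' measurableSet_Icc fun y hy => ?_
        obtain ⟨hy0, hy1⟩ : (∀ j, 0 ≤ y j) ∧ ∀ j, y j ≤ 1 := hy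
        have hsum0 : 0 ≤ ∑ j, y j := Finset.sum_nonneg fun j _ => hy0 j
        have hsumn : ∑ j, y j ≤ n := by
          simpa using Finset.sum_le_sum fun j (_ : j ∈ Finset.univ) => hy1 j
        simp only [Fin.sum_cons, Pi.zero_apply, Pi.one_apply]
        rw [setLIntegral_Icc_comp_add_right]
        exact lintegral_mono_set (Icc_subset_Icc (by simpa) (by linarith))
    _ = ∫⁻ s in Icc 0 ((n : ℝ) + 1), f s := by
        simp [Real.volume_Icc_pi]

/-- The iterated-integral estimate from the appendix of the paper: for a nonnegative
measurable `g`, the integral of `g(σ₁ + ⋯ + σ_ℓ)` over the unit cube `[0,1]^ℓ` is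
bounded by `∫_0^ℓ g(s) ds`. -/
theorem cube_integral_of_sum_le
    (ℓ : ℕ) (hℓ : 1 ≤ ℓ) (g : ℝ → ℝ) (hg : Measurable g) (hg0 : ∀ x, 0 ≤ g x)
    (hgi : IntegrableOn g (Set.Icc 0 (ℓ : ℝ))) :
    ∫ σ in Set.Icc (0 : Fin ℓ → ℝ) (fun _ => 1), g (∑ i, σ i) ≤
      ∫ s in (0 : ℝ)..(ℓ : ℝ), g s := by
  obtain ⟨n, rfl⟩ := Nat.exists_eq_add_of_le' hℓ
  have hsum : Measurable fun σ : Fin (n + 1) → ℝ => g (∑ i, σ i) :=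
    hg.comp (Finset.measurable_sum _ fun i _ => measurable_pi_apply i)
  rw [intervalIntegral.integral_of_le (by positivity), ← integral_Icc_eq_integral_Ioc,
    integral_eq_lintegral_of_nonneg_ae (.of_forall fun σ => hg0 _) hsum.aestronglyMeasurable,
    integral_eq_lintegral_of_nonneg_ae (.of_forall hg0) hg.aestronglyMeasurable]
  push_cast at hgi ⊢
  exact ENNReal.toReal_mono hgi.lintegral_lt_top.ne
    (setLIntegral_unitCube_comp_sum_le n (ENNReal.measurable_ofReal.comp hg))
end
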